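/- arXiv:0910.4885 — 2 statements merged into one kernel-verified Lean document; each statement's English description precedes it below -/
import Mathlib

section
/- Let q = 3 and n = 6. If (λ;μ) is a symbol of rank 6 and type ²D_6 that is not one of the five symbols (0,6; ), (1,5; ), (2,4; ), (0,1,6; 1), (0,1,2; 5), then its generic degree satisfies d(λ;μ) > 4·3^{15}. Consequently, every unipotent complex character of P(CO^−_{12}(3)^0) other than the five characters labeled by these symbols has degree greater than 4·3^{15}. -/
/-!
The entries of a symbol `(λ; μ)` with `a` and `b` entries are distinct in each row and the rows
do not both start at `0`, so they sum to at least `C(a,2) + C(b,2) + b`. Against the rank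
condition this gives `(a - b)² + 4b ≤ 4n`; for `n = 6` it forces `a = b + 2` and `b ≤ 5`.
Only finitely many symbols remain: they are enumerated as pairs of increasing lists of
prescribed lengths and total sum, and the kernel evaluates the generic degree at `q = 3` on each.
-/

/-- The exponent `N = C(a+b-2,2) + C(a+b-4,2) + ⋯` appearing in the generic degree formula. -/
def symbN (a b : ℕ) : ℕ := ∑ j ∈ Finset.range (a + b), Nat.choose (a + b - 2 * (j + 1)) 2

/-- `∏_{x < y ∈ l} (q^y - q^x)`. -/
def prodDiff (q : ℚ) (l : Finset ℕ) : ℚ :=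
  ∏ x ∈ l, ∏ y ∈ l, if x < y then (q ^ y - q ^ x) else 1

/-- `∏_{x ∈ l, y ∈ m} (q^x + q^y)`. -/
def prodSum (q : ℚ) (l m : Finset ℕ) : ℚ := ∏ x ∈ l, ∏ y ∈ m, (q ^ x + q ^ y)

/-- `∏_{x ∈ l} ∏_{k=1}^{x} (q^{2k} - 1)`. -/
def prodDen (q : ℚ) (l : Finset ℕ) : ℚ :=
  ∏ x ∈ l, ∏ k ∈ Finset.Icc 1 x, (q ^ (2 * k) - 1)

/-- `(l; m)` is a symbol of rank `n` and type `²D_n`: two strictly increasing sequences of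
nonnegative integers (encoded as finite sets), whose numbers `a`, `b` of entries satisfy
`a > b` and `a - b ≡ 2 (mod 4)`, whose first entries are not both `0`, and with
`Σ l + Σ m - ⌊((a+b-1)/2)²⌋ = n`. -/
def IsSymbol2D (n : ℕ) (l m : Finset ℕ) : Prop :=
  m.card < l.card ∧ (l.card - m.card) % 4 = 2 ∧ ¬(0 ∈ l ∧ 0 ∈ m) ∧
    l.sum id + m.sum id = (l.card + m.card - 1) ^ 2 / 4 + n

/-- The generic degree of a symbol of type `²D_n`. -/
def gdeg2D (q : ℚ) (n : ℕ) (l m : Finset ℕ) : ℚ :=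
  ((q ^ n + 1) * (∏ i ∈ Finset.Icc 1 (n - 1), (q ^ (2 * i) - 1)) * prodDiff q l * prodDiff q m *
      prodSum q l m) /
    (2 ^ ((l.card + m.card - 2) / 2) * q ^ symbN l.card m.card * prodDen q l * prodDen q m)

open Finset

-- The strictly increasing lists of length `n`, entries `≥ lo` and sum `s`; the head `x` of such a
-- list of length `n + 1` satisfies `(n + 1) * x ≤ s`, which bounds the search.
def increasingLists : ℕ → ℕ → ℕ → List (List ℕ)
  | 0, _, s => if s = 0 then [[]] else []
  | n + 1, lo, s => (List.range' lo (s / (n + 1) + 1 - lo)).flatMap fun x =>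
      (increasingLists n (x + 1) (s - x)).map (x :: ·)

theorem mem_increasingLists : ∀ {n lo : ℕ} {L : List ℕ}, L.length = n → L.Pairwise (· < ·) →
    (∀ x ∈ L, lo ≤ x) → L ∈ increasingLists n lo L.sum
  | 0, _, [], _, _, _ => by simp [increasingLists]
  | n + 1, lo, x :: T, hlen, hsorted, hlo => by
    rw [List.pairwise_cons] at hsorted
    simp only [List.length_cons, Nat.add_right_cancel_iff] at hlen
    have hT : n * x ≤ T.sum := by
      simpa [hlen] using T.card_nsmul_le_sum x fun y hy => (hsorted.1 y hy).le
    simp only [increasingLists, List.sum_cons, List.mem_flatMap, List.mem_range'_1, List.mem_map]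
    refine ⟨x, ⟨hlo x List.mem_cons_self, ?_⟩, T, ?_, rfl⟩
    · have : x ≤ (x + T.sum) / (n + 1) := (Nat.le_div_iff_mul_le n.succ_pos).2 (by linarith)
      omega
    · rw [Nat.add_sub_cancel_left]
      exact mem_increasingLists hlen hsorted.2 hsorted.1

theorem Finset.sort_mem_increasingLists (s : Finset ℕ) :
    s.sort ∈ increasingLists #s 0 (∑ x ∈ s, x) := by
  have hsum : s.sort.sum = ∑ x ∈ s, x := by
    rw [Finset.sum_eq_multiset_sum, Multiset.map_id', ← Multiset.sum_coe, Finset.sort,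
      Multiset.sort_eq]
  simpa [hsum] using mem_increasingLists (length_sort _) (sortedLT_sort s).pairwise
    (fun x _ => Nat.zero_le x)

def symbolCandidates (n a b : ℕ) : List (List ℕ × List ℕ) :=
  let s := (a + b - 1) ^ 2 / 4 + n
  (List.range (s + 1)).flatMap fun t => increasingLists a 0 t ×ˢ increasingLists b 0 (s - t)

theorem IsSymbol2D.sort_mem_symbolCandidates {n : ℕ} {l m : Finset ℕ} (h : IsSymbol2D n l m) :
    (l.sort, m.sort) ∈ symbolCandidates n #l #m := by
  have hsum : ∑ x ∈ l, x + ∑ x ∈ m, x = (#l + #m - 1) ^ 2 / 4 + n := h.2.2.2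
  simp only [symbolCandidates, List.mem_flatMap, List.mem_range, List.mem_product]
  refine ⟨∑ x ∈ l, x, by omega, l.sort_mem_increasingLists, ?_⟩
  rw [← hsum, Nat.add_sub_cancel_left]
  exact m.sort_mem_increasingLists

theorem Nat.two_mul_choose_two_add_self (n : ℕ) : 2 * n.choose 2 + n = n * n := by
  induction n with
  | zero => rfl
  | succ n ih =>
    rw [Nat.choose_succ_succ', Nat.choose_one_right]
    nlinarith

theorem Finset.mul_card_add_choose_two_le_sum {s : Finset ℕ} {lo : ℕ} (h : ∀ x ∈ s, lo ≤ x) :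
    lo * #s + (#s).choose 2 ≤ ∑ x ∈ s, x := by
  induction s using Finset.induction_on_max with
  | empty => simp
  | insert a s ha ih =>
    have ha_notMem : a ∉ s := fun has => (ha a has).false
    have hcard : lo + #s ≤ a := by
      have hsub : s ⊆ Ico lo a := fun x hx =>
        mem_Ico.2 ⟨h x (mem_insert_of_mem hx), ha x hx⟩
      have := card_le_card hsub
      rw [Nat.card_Ico] at this
      have := h a (mem_insert_self a s)
      omega
    have ih' := ih fun x hx => h x (mem_insert_of_mem hx)
    rw [card_insert_of_notMem ha_notMem, sum_insert ha_notMem, Nat.choose_succ_succ',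
      Nat.choose_one_right, mul_add_one]
    linarith

theorem IsSymbol2D.defect_bound {n : ℕ} {l m : Finset ℕ} (h : IsSymbol2D n l m) :
    (#l - #m) ^ 2 + 4 * #m ≤ 4 * n := by
  obtain ⟨hlt, hmod, hzero, hsum⟩ := h
  change ∑ x ∈ l, x + ∑ x ∈ m, x = _ at hsum
  have hlower : (#l).choose 2 + (#m).choose 2 + #m ≤ ∑ x ∈ l, x + ∑ x ∈ m, x := by
    rcases not_and_or.1 hzero with hl | hm
    · have := mul_card_add_choose_two_le_sum (s := l) (lo := 1)
        fun x hx => Nat.one_le_iff_ne_zero.2 fun hx0 => hl (hx0 ▸ hx)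
      have := mul_card_add_choose_two_le_sum (s := m) (lo := 0) fun x _ => x.zero_le
      omega
    · have := mul_card_add_choose_two_le_sum (s := l) (lo := 0) fun x _ => x.zero_le
      have := mul_card_add_choose_two_le_sum (s := m) (lo := 1)
        fun x hx => Nat.one_le_iff_ne_zero.2 fun hx0 => hm (hx0 ▸ hx)
      omega
  obtain ⟨k, hk⟩ : ∃ k, #l = #m + (4 * k + 2) := ⟨(#l - #m) / 4, by omega⟩
  have hhalf : (#l + #m - 1) ^ 2 / 4 = (#m + 2 * k) ^ 2 + (#m + 2 * k) := by
    have hodd : #l + #m - 1 = 2 * (#m + 2 * k) + 1 := by omega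
    have hsq : (2 * (#m + 2 * k) + 1) ^ 2 = 4 * ((#m + 2 * k) ^ 2 + (#m + 2 * k)) + 1 := by ring
    rw [hodd, hsq]
    omega
  have hl2 := Nat.two_mul_choose_two_add_self #l
  have hm2 := Nat.two_mul_choose_two_add_self #m
  rw [hhalf] at hsum
  rw [hk] at hl2 hlower ⊢
  rw [Nat.add_sub_cancel_left]
  linarith

theorem IsSymbol2D.card_eq_of_rank_six {l m : Finset ℕ} (h : IsSymbol2D 6 l m) :
    #l = #m + 2 ∧ #m ≤ 5 := by
  have hbound := h.defect_bound
  obtain ⟨hlt, hmod, -, -⟩ := h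
  have hdefect : #l - #m = 2 := by
    have : #l - #m < 6 := by nlinarith
    omega
  rw [hdefect] at hbound
  omega

def rankSixExceptions : List (Finset ℕ × Finset ℕ) :=
  [({0, 6}, ∅), ({1, 5}, ∅), ({2, 4}, ∅), ({0, 1, 6}, {1}), ({0, 1, 2}, {5})]

theorem gdeg2D_three_six_gt_of_mem_symbolCandidates :
    ∀ b ∈ List.range 6, ∀ p ∈ symbolCandidates 6 (b + 2) b, ¬(0 ∈ p.1 ∧ 0 ∈ p.2) →
      (p.1.toFinset, p.2.toFinset) ∉ rankSixExceptions →
      (4 * 3 ^ 15 : ℚ) < gdeg2D 3 6 p.1.toFinset p.2.toFinset := by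
  -- `Rat` comparisons do not reduce in the elaborator's `decide`, but they do in the kernel.
  decide +kernel

/-- Lemma 8.1: every symbol of rank `6` and type `²D_6` other than the five listed ones has
generic degree (at `q = 3`) greater than `4 · 3^15`.  Consequently (via Lusztig's
classification), all but five unipotent complex characters of `P(CO⁻₁₂(3)⁰)` have degree
greater than `4 · 3^15`. -/
theorem symbol2D_rank6_q3_generic_degree_gap :
    ∀ l m : Finset ℕ, IsSymbol2D 6 l m →
      (l, m) ∉ ([(({0, 6} : Finset ℕ), (∅ : Finset ℕ)), ({1, 5}, ∅), ({2, 4}, ∅), ({0, 1, 6}, {1}),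
        ({0, 1, 2}, {5})] : List (Finset ℕ × Finset ℕ)) →
      (4 * 3 ^ 15 : ℚ) < gdeg2D (3 : ℚ) 6 l m := by
  intro l m hsym hex
  obtain ⟨hcard, hb⟩ := hsym.card_eq_of_rank_six
  have hmem := hsym.sort_mem_symbolCandidates
  rw [hcard] at hmem
  simpa only [sort_toFinset] using
    gdeg2D_three_six_gt_of_mem_symbolCandidates #m (List.mem_range.2 (by omega)) _ hmem
      (by simpa only [mem_sort] using hsym.2.2.1) (by rwa [sort_toFinset, sort_toFinset])
end

section
/- Let q = 3 and n = 6. If {λ,μ} is a symbol of rank 6 and type D_6 that is not one of the six symbols {(6),(0)}, {(5),(1)}, {(4),(2)}, {(3),(3)} (this degenerate symbol labels 2 characters), {(0,1),(1,6)}, {(0,1,2,5),( )}, then its generic degree satisfies d(λ;μ) > 4·3^{15}. Consequently, every unipotent complex character of P(CO^+_{12}(3)^0) other than the seven characters labeled by these symbols has degree greater than 4·3^{15}. -/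
/-- `(l; m)` is a symbol of rank `n` and type `D_n`: two strictly increasing sequences of
nonnegative integers (encoded as finite sets), whose numbers `a`, `b` of entries satisfy
`a - b ≡ 0 (mod 4)`, whose first entries are not both `0`, and with
`Σ l + Σ m - ⌊((a+b-1)/2)²⌋ = n`. -/
def IsSymbolD (n : ℕ) (l m : Finset ℕ) : Prop :=
  (4 : ℤ) ∣ ((l.card : ℤ) - (m.card : ℤ)) ∧ ¬(0 ∈ l ∧ 0 ∈ m) ∧
    l.sum id + m.sum id = (l.card + m.card - 1) ^ 2 / 4 + n

/-- The generic degree of a symbol of type `D_n`. -/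
def gdegD (q : ℚ) (n : ℕ) (l m : Finset ℕ) : ℚ :=
  ((q ^ n - 1) * (∏ i ∈ Finset.Icc 1 (n - 1), (q ^ (2 * i) - 1)) * prodDiff q l * prodDiff q m *
      prodSum q l m) /
    (2 ^ (if l = m then l.card else (l.card + m.card - 2) / 2) * q ^ symbN l.card m.card *
      prodDen q l * prodDen q m)

/-! Once `0 ∉ μ` (which a swap achieves, since both the conditions on a symbol and its generic
degree are symmetric in `λ, μ`), the rank equation together with `a ≡ b (mod 4)` confines the
entries of `λ` to `[0, n)` and those of `μ` to `[1, n]`: the remaining entries of each row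
contribute at least `0 + 1 + ⋯` resp. `1 + 2 + ⋯`, which already exceeds `⌊(a+b-1)²/4⌋`.
For `n = 6` this leaves finitely many candidate symbols, and their generic degrees at `q = 3`
are compared with `4 · 3¹⁵` by exact rational arithmetic. -/

open Finset

instance (n : ℕ) (l m : Finset ℕ) : Decidable (IsSymbolD n l m) :=
  inferInstanceAs (Decidable (_ ∧ _ ∧ _))

theorem IsSymbolD.symm {n : ℕ} {l m : Finset ℕ} (h : IsSymbolD n l m) : IsSymbolD n m l := by
  obtain ⟨hdvd, h0, hsum⟩ := h
  refine ⟨?_, fun h' => h0 h'.symm, by rw [add_comm, hsum, add_comm #l]⟩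
  rw [← dvd_neg, neg_sub]; exact hdvd

theorem prodSum_comm (q : ℚ) (l m : Finset ℕ) : prodSum q l m = prodSum q m l := by
  unfold prodSum; rw [prod_comm]; simp only [add_comm]

theorem symbN_comm (a b : ℕ) : symbN a b = symbN b a := by
  unfold symbN; rw [add_comm]

theorem gdegD_comm (q : ℚ) (n : ℕ) (l m : Finset ℕ) : gdegD q n l m = gdegD q n m l := by
  unfold gdegD
  rw [prodSum_comm, symbN_comm, add_comm #l]
  by_cases hlm : l = m
  · subst hlm; rfl
  · rw [if_neg hlm, if_neg (Ne.symm hlm)]; ring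

theorem two_mul_sum_range_add_self (n : ℕ) : 2 * ∑ i ∈ range n, i + n = n ^ 2 := by
  induction n with
  | zero => simp
  | succ n ih => rw [sum_range_succ]; linarith

theorem two_mul_sum_range_add_one (n : ℕ) : 2 * ∑ i ∈ range n, (i + 1) = n ^ 2 + n := by
  rw [sum_add_distrib, sum_const, card_range, smul_eq_mul, mul_one, mul_add,
    ← two_mul_sum_range_add_self]
  ring

theorem sq_div_four_lt_sum_range_left {A b : ℕ} (h : (4 : ℤ) ∣ (A + 1 : ℤ) - b) :
    (A + b) ^ 2 / 4 < ∑ i ∈ range A, i + ∑ i ∈ range b, (i + 1) := by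
  obtain ⟨k, hk⟩ := h
  have hA := two_mul_sum_range_add_self A
  have hb := two_mul_sum_range_add_one b
  rw [Nat.div_lt_iff_lt_mul four_pos]
  zify at hA hb ⊢
  have hAb : (A : ℤ) = b + (4 * k - 1) := by linarith
  -- the gap is `(A - b)(A - b - 2) = (4k - 1)(4k - 3)`, positive for every integer `k`
  have hpos : (0 : ℤ) < (4 * k - 1) * (4 * k - 3) := by
    rcases le_or_gt k 0 with hk0 | hk0 <;> nlinarith
  rw [hAb] at hA ⊢
  nlinarith

theorem sq_div_four_lt_sum_range_right (a B : ℕ) :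
    (a + B) ^ 2 / 4 < ∑ i ∈ range a, i + ∑ i ∈ range B, (i + 1) + 1 := by
  have ha := two_mul_sum_range_add_self a
  have hB := two_mul_sum_range_add_one B
  rw [Nat.div_lt_iff_lt_mul four_pos]
  zify at ha hB ⊢
  nlinarith [sq_nonneg ((a : ℤ) - B - 1)]

theorem sum_range_add_le_sum {s : Finset ℕ} {c : ℕ} (hc : ∀ x ∈ s, c ≤ x) :
    ∑ i ∈ range #s, (i + c) ≤ ∑ x ∈ s, x := by
  induction s using Finset.induction_on_max with
  | empty => simp
  | insert a s hlt ih =>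
    have ha : a ∉ s := fun h => lt_irrefl a (hlt a h)
    have hcard : #s + c ≤ a := by
      have hsub : s ⊆ Ico c a := fun x hx =>
        mem_Ico.mpr ⟨hc x (mem_insert_of_mem hx), hlt x hx⟩
      have := (card_le_card hsub).trans_eq (Nat.card_Ico c a)
      have := hc a (mem_insert_self a s)
      omega
    rw [card_insert_of_notMem ha, sum_insert ha, sum_range_succ]
    have := ih fun x hx => hc x (mem_insert_of_mem hx)
    omega

theorem add_sum_range_add_le_sum {s : Finset ℕ} {c x : ℕ} (hc : ∀ y ∈ s, c ≤ y)
    (hx : x ∈ s) : x + ∑ i ∈ range (#s - 1), (i + c) ≤ ∑ y ∈ s, y := by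
  rw [← add_sum_erase s _ hx, ← card_erase_of_mem hx]
  gcongr
  exact sum_range_add_le_sum fun y hy => hc y (mem_of_mem_erase hy)

theorem IsSymbolD.subset_of_zero_notMem {n : ℕ} {l m : Finset ℕ} (h : IsSymbolD n l m)
    (h0 : 0 ∉ m) : l ⊆ range n ∧ m ⊆ Icc 1 n := by
  obtain ⟨hdvd, -, hsum⟩ := h
  change ∑ x ∈ l, x + ∑ x ∈ m, x = _ at hsum
  have hl0 : ∀ x ∈ l, 0 ≤ x := fun x _ => x.zero_le
  have hm1 : ∀ x ∈ m, 1 ≤ x := fun x hx =>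
    Nat.one_le_iff_ne_zero.mpr (ne_of_mem_of_not_mem hx h0)
  constructor
  · intro x hx
    obtain ⟨A, hA⟩ := Nat.exists_eq_add_one.mpr (card_pos.mpr ⟨x, hx⟩)
    have hxl := add_sum_range_add_le_sum hl0 hx
    have hm := sum_range_add_le_sum hm1
    have key := sq_div_four_lt_sum_range_left (A := A) (b := #m) <| by
      rw [hA] at hdvd; exact_mod_cast hdvd
    rw [show #l + #m - 1 = A + #m by omega] at hsum
    simp only [hA, add_zero, Nat.add_sub_cancel] at hxl
    rw [mem_range]
    omega
  · intro x hx
    obtain ⟨B, hB⟩ := Nat.exists_eq_add_one.mpr (card_pos.mpr ⟨x, hx⟩)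
    have hl := sum_range_add_le_sum hl0
    have hxm := add_sum_range_add_le_sum hm1 hx
    have key := sq_div_four_lt_sum_range_right #l B
    rw [show #l + #m - 1 = #l + B by omega] at hsum
    simp only [hB, add_zero, Nat.add_sub_cancel] at hl hxm
    rw [mem_Icc]
    exact ⟨hm1 x hx, by omega⟩

def exceptionalSymbolsD6 : List (Finset ℕ × Finset ℕ) :=
  [({6}, {0}), ({0}, {6}), ({5}, {1}), ({1}, {5}), ({4}, {2}), ({2}, {4}), ({3}, {3}),
    ({0, 1}, {1, 6}), ({1, 6}, {0, 1}), ({0, 1, 2, 5}, ∅), (∅, {0, 1, 2, 5})]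

theorem swap_mem_exceptionalSymbolsD6 :
    ∀ p ∈ exceptionalSymbolsD6, p.swap ∈ exceptionalSymbolsD6 := by
  decide

theorem four_mul_three_pow_lt_gdegD_of_subset :
    ∀ l ∈ (range 6).powerset, ∀ m ∈ (Icc 1 6).powerset, IsSymbolD 6 l m →
      (l, m) ∉ exceptionalSymbolsD6 → (4 * 3 ^ 15 : ℚ) < gdegD 3 6 l m := by
  decide +kernel

/-- Lemma 8.2: every symbol of rank `6` and type `D_6` other than the six listed unordered
symbols (the degenerate symbol `(3),(3)` labelling two unipotent characters) has generic
degree (at `q = 3`) greater than `4 · 3^15`.  Consequently (via Lusztig's classification),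
all but seven unipotent complex characters of `P(CO⁺₁₂(3)⁰)` have degree greater than
`4 · 3^15`. -/
theorem symbolD_rank6_q3_generic_degree_gap :
    ∀ l m : Finset ℕ, IsSymbolD 6 l m →
      (l, m) ∉ ([(({6} : Finset ℕ), ({0} : Finset ℕ)), ({0}, {6}), ({5}, {1}), ({1}, {5}),
        ({4}, {2}), ({2}, {4}), ({3}, {3}), ({0, 1}, {1, 6}), ({1, 6}, {0, 1}),
        ({0, 1, 2, 5}, ∅), (∅, {0, 1, 2, 5})] : List (Finset ℕ × Finset ℕ)) →
      (4 * 3 ^ 15 : ℚ) < gdegD (3 : ℚ) 6 l m := by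
  intro l m hsym hexc
  wlog h0 : 0 ∉ m generalizing l m
  · have h0l : 0 ∉ l := fun h0l => hsym.2.1 ⟨h0l, not_not.mp h0⟩
    rw [gdegD_comm]
    exact this m l hsym.symm (fun h => hexc (swap_mem_exceptionalSymbolsD6 _ h)) h0l
  obtain ⟨hl, hm⟩ := hsym.subset_of_zero_notMem h0
  exact four_mul_three_pow_lt_gdegD_of_subset l (mem_powerset.mpr hl) m (mem_powerset.mpr hm)
    hsym hexc
end
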